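/- arXiv:2205.11939 — 9 statements merged into one kernel-verified Lean document; each statement's English description precedes it below -/
import Mathlib

section
/- If a partition π' Pareto dominates a partition π of a finite set of agents N (i.e., every agent's utility in π' is at least its utility in π, with strict inequality for some agent), then the sequence of agents' utilities in π' sorted in non-increasing order is lexicographically greater than the corresponding sorted sequence for π. -/
/-- A partition of the agents of type `α`, given as the map sending each agent to her
coalition: every agent belongs to her own coalition, and the coalitions are consistent. -/
def IsPartitionFn {α : Type*} [DecidableEq α] (C : α → Finset α) : Prop :=
  (∀ i, i ∈ C i) ∧ ∀ i j, i ∈ C j → C i = C j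

/-- The social welfare of a partition: the sum of the agents' utilities. -/
noncomputable def welfare {α : Type*} [Fintype α] (U : Finset α → ℝ) (C : α → Finset α) : ℝ :=
  ∑ i, U (C i)

/-- `C'` Pareto dominates `C`. -/
def ParetoDominates {α : Type*} (U : Finset α → ℝ) (C C' : α → Finset α) : Prop :=
  (∀ i, U (C i) ≤ U (C' i)) ∧ ∃ i, U (C i) < U (C' i)

/-- No partition Pareto dominates `C`. -/
def ParetoOptimal {α : Type*} [DecidableEq α] (U : Finset α → ℝ) (C : α → Finset α) : Prop :=
  ¬ ∃ C', IsPartitionFn C' ∧ ParetoDominates U C C'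

/-- No nonempty coalition blocks `C`. -/
def CoreStable {α : Type*} (U : Finset α → ℝ) (C : α → Finset α) : Prop :=
  ¬ ∃ S : Finset α, S.Nonempty ∧ ∀ i ∈ S, U (C i) < U S

/-- No agent can beneficially move to an existing (possibly empty) coalition without
making the members of that coalition worse off. -/
def IndividuallyStable {α : Type*} [DecidableEq α] (U : Finset α → ℝ) (C : α → Finset α) : Prop :=
  ¬ ∃ i T, i ∉ T ∧ (T = ∅ ∨ ((∃ j, C j = T) ∧ U T ≤ U (insert i T))) ∧
    U (C i) < U (insert i T)

/-- No agent can beneficially move to an existing (possibly empty) coalition. -/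
def NashStable {α : Type*} [DecidableEq α] (U : Finset α → ℝ) (C : α → Finset α) : Prop :=
  ¬ ∃ i T, i ∉ T ∧ (T = ∅ ∨ ∃ j, C j = T) ∧ U (C i) < U (insert i T)

/-- The sequence of the agents' utilities in partition `C`, sorted in non-increasing order. -/
noncomputable def psi {α : Type*} [Fintype α] (U : Finset α → ℝ) (C : α → Finset α) : List ℝ :=
  (Finset.univ.val.map fun i => U (C i)).sort (· ≥ ·)

namespace Multiset

variable {ι β : Type*} [DecidableEq ι] [LinearOrder β]

theorem sort_ge_map_eq_cons_of_forall_le {s : Multiset ι} {f : ι → β} {i : ι} (hi : i ∈ s)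
    (hmax : ∀ j ∈ s, f j ≤ f i) :
    (s.map f).sort (· ≥ ·) = f i :: ((s.erase i).map f).sort (· ≥ ·) := by
  conv_lhs => rw [← cons_erase hi, map_cons]
  refine sort_cons _ _ _ fun b hb => ?_
  obtain ⟨j, hj, rfl⟩ := mem_map.mp hb
  exact hmax j (mem_of_mem_erase hj)

theorem lex_sort_ge_map_of_le_of_exists_lt (s : Multiset ι) {f g : ι → β}
    (hle : ∀ i ∈ s, f i ≤ g i) (hlt : ∃ i ∈ s, f i < g i) :
    List.Lex (· < ·) ((s.map f).sort (· ≥ ·)) ((s.map g).sort (· ≥ ·)) := by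
  induction s using strongInductionOn with
  | ih s ih =>
  obtain ⟨i₁, hi₁, hfg₁⟩ := hlt
  have hs : s ≠ 0 := ne_of_mem_of_not_mem' hi₁ (notMem_zero i₁)
  obtain ⟨i, hi, hfmax⟩ := exists_max_image f hs
  obtain ⟨j, hj, hgmax⟩ := exists_max_image g hs
  rw [sort_ge_map_eq_cons_of_forall_le hi hfmax]
  rcases lt_or_ge (f i) (g j) with hij | hji
  · rw [sort_ge_map_eq_cons_of_forall_le hj hgmax]
    exact List.Lex.rel hij
  -- otherwise `f i = g i` is also the largest value of `g`, and the heads cancel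
  have hfg : f i = g i := le_antisymm (hle i hi) ((hgmax i hi).trans hji)
  rw [sort_ge_map_eq_cons_of_forall_le hi fun k hk => hfg ▸ (hgmax k hk).trans hji, hfg]
  have hne : i₁ ≠ i := by rintro rfl; exact hfg₁.ne hfg
  exact List.Lex.cons <| ih _ (erase_lt.mpr hi) (fun k hk => hle k (mem_of_mem_erase hk))
    ⟨i₁, (mem_erase_of_ne hne).mpr hi₁, hfg₁⟩

end Multiset

theorem stmt0_general {α : Type*} [Fintype α]
    (U : Finset α → ℝ)
    (C C' : α → Finset α)
    (hdom : ParetoDominates U C C') :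
    List.Lex (· < ·) (psi U C) (psi U C') := by
  classical
  obtain ⟨hle, i, hi⟩ := hdom
  exact Finset.univ.val.lex_sort_ge_map_of_le_of_exists_lt (fun i _ => hle i)
    ⟨i, Finset.mem_univ i, hi⟩

/-- If `C'` Pareto dominates `C`, then the non-increasingly sorted utility sequence of `C'`
is lexicographically greater than that of `C`. -/
theorem stmt0 {α : Type*} [Fintype α] [DecidableEq α]
    (U : Finset α → ℝ) (hU : ∀ S : Finset α, 0 ≤ U S)
    (C C' : α → Finset α) (hC : IsPartitionFn C) (hC' : IsPartitionFn C')
    (hdom : ParetoDominates U C C') :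
    List.Lex (· < ·) (psi U C) (psi U C') :=
  stmt0_general U C C' hdom
end

section
/- If S is a blocking coalition with respect to a partition π of an HGCRP instance (i.e., U(S) > u_i(π) for every i ∈ S), then the non-increasingly sorted utility sequence of the partition π_S induced by the deviation of S is lexicographically greater than that of π. -/
theorem List.countP_le_eq_zero_of_pairwise {β : Type*} [LinearOrder β] {x a : β} {t : List β}
    (hl : (a :: t).Pairwise (· ≥ ·)) (hax : a < x) : (a :: t).countP (x ≤ ·) = 0 := by
  refine List.countP_eq_zero.mpr fun b hb hxb => ?_
  rcases List.mem_cons.mp hb with rfl | hb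
  · exact (of_decide_eq_true hxb).not_gt hax
  · exact ((of_decide_eq_true hxb).trans (List.rel_of_pairwise_cons hl hb)).not_gt hax

theorem List.lex_lt_of_countP_le {β : Type*} [LinearOrder β] (v : β) :
    ∀ {l l' : List β}, l.Pairwise (· ≥ ·) → l'.Pairwise (· ≥ ·) →
      (∀ x, v ≤ x → l.countP (x ≤ ·) ≤ l'.countP (x ≤ ·)) →
      l.countP (v ≤ ·) < l'.countP (v ≤ ·) → List.Lex (· < ·) l l'
  | [], [], _, _, _, hlt => by simp at hlt
  | [], _ :: _, _, _, _, _ => .nil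
  | _ :: _, [], _, _, _, hlt => by simp at hlt
  | a :: t, b :: t', hl, hl', hle, hlt => by
    rcases lt_or_ge a b with hab | hba
    · exact .rel hab
    by_cases hva : v ≤ a
    swap
    · have := List.countP_le_eq_zero_of_pairwise hl' (hba.trans_lt (not_le.mp hva))
      omega
    obtain rfl | hba := hba.eq_or_lt
    · refine .cons (lex_lt_of_countP_le v hl.of_cons hl'.of_cons (fun x hx => ?_) ?_)
      · have := hle x hx
        simp only [List.countP_cons] at this
        omega
      · simpa [List.countP_cons, hva] using hlt
    · have := (hle a hva).trans_eq (List.countP_le_eq_zero_of_pairwise hl' hba)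
      simp at this

section Psi

open Finset

theorem psi_pairwise {α : Type*} [Fintype α] (U : Finset α → ℝ) (C : α → Finset α) :
    (psi U C).Pairwise (· ≥ ·) :=
  Multiset.pairwise_sort _ _

theorem countP_psi {α : Type*} [Fintype α] (U : Finset α → ℝ) (C : α → Finset α) (x : ℝ) :
    (psi U C).countP (x ≤ ·) = #{i | x ≤ U (C i)} := by
  rw [← Multiset.coe_countP, psi, Multiset.sort_eq, Multiset.countP_map]
  rfl

end Psi

/-- The partition `π_S` induced by the deviation of `S`. -/
def inducedPartition {α : Type*} [DecidableEq α] (C : α → Finset α) (S : Finset α) :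
    α → Finset α :=
  fun i => if i ∈ S then S else C i \ S

section Blocking

open Finset

variable {α : Type*} [DecidableEq α] {U : Finset α → ℝ} {C : α → Finset α} {S : Finset α}

theorem utility_inducedPartition_of_le (hC : IsPartitionFn C) (hblock : ∀ i ∈ S, U (C i) < U S)
    {j : α} (hj : U S ≤ U (C j)) : U (inducedPartition C S j) = U (C j) := by
  have hjS : j ∉ S := fun h => (hblock j h).not_ge hj
  have hdisj : Disjoint (C j) S := disjoint_left.mpr fun s hs hsS =>
    (hblock s hsS).not_ge (hC.2 s j hs ▸ hj)
  simp only [inducedPartition, if_neg hjS, sdiff_eq_self_of_disjoint hdisj]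

variable [Fintype α]

theorem filter_le_utility_subset (hC : IsPartitionFn C) (hblock : ∀ i ∈ S, U (C i) < U S)
    {x : ℝ} (hx : U S ≤ x) :
    ({i | x ≤ U (C i)} : Finset α) ⊆ ({i | x ≤ U (inducedPartition C S i)} : Finset α) := by
  intro i
  simp only [mem_filter, mem_univ, true_and]
  intro hi
  rwa [utility_inducedPartition_of_le hC hblock (hx.trans hi)]

theorem filter_le_utility_ssubset (hC : IsPartitionFn C) (hSne : S.Nonempty)
    (hblock : ∀ i ∈ S, U (C i) < U S) :
    ({i | U S ≤ U (C i)} : Finset α) ⊂ ({i | U S ≤ U (inducedPartition C S i)} : Finset α) := by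
  obtain ⟨i, hi⟩ := hSne
  refine Finset.ssubset_iff_subset_ne.mpr ⟨filter_le_utility_subset hC hblock le_rfl, fun h => ?_⟩
  have hmem : i ∈ ({i | U S ≤ U (inducedPartition C S i)} : Finset α) :=
    mem_filter.mpr ⟨mem_univ i, by simp only [inducedPartition, if_pos hi, le_rfl]⟩
  rw [← h, mem_filter] at hmem
  exact (hblock i hi).not_ge hmem.2

end Blocking

theorem stmt1_general {α : Type*} [Fintype α] [DecidableEq α]
    (U : Finset α → ℝ)
    (C : α → Finset α) (hC : IsPartitionFn C)
    (S : Finset α) (hSne : S.Nonempty) (hblock : ∀ i ∈ S, U (C i) < U S) :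
    List.Lex (· < ·) (psi U C) (psi U (fun i => if i ∈ S then S else C i \ S)) := by
  change List.Lex (· < ·) (psi U C) (psi U (inducedPartition C S))
  refine List.lex_lt_of_countP_le (U S) (psi_pairwise U C) (psi_pairwise U _) (fun x hx => ?_) ?_
  · rw [countP_psi, countP_psi]
    exact Finset.card_le_card (filter_le_utility_subset hC hblock hx)
  · rw [countP_psi, countP_psi]
    exact Finset.card_lt_card (filter_le_utility_ssubset hC hSne hblock)

/-- If `S` is a blocking coalition with respect to partition `C`, then the sorted utility
sequence of the induced partition `π_S` is lexicographically greater than that of `C`. -/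
theorem stmt1 {α : Type*} [Fintype α] [DecidableEq α]
    (U : Finset α → ℝ) (hU : ∀ T : Finset α, 0 ≤ U T)
    (C : α → Finset α) (hC : IsPartitionFn C)
    (S : Finset α) (hSne : S.Nonempty) (hblock : ∀ i ∈ S, U (C i) < U S) :
    List.Lex (· < ·) (psi U C) (psi U (fun i => if i ∈ S then S else C i \ S)) :=
  stmt1_general U C hC S hSne hblock
end

section
/- If S ∈ π is a coalition of a partition π of an HGCRP instance such that for some agent i ∉ S we have U(S ∪ {i}) > U(π(i)) and U(S ∪ {i}) ≥ U(S), then the non-increasingly sorted utility sequence of the partition obtained by moving i into S is lexicographically greater than that of π. -/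
/-!
Put `t = U (S ∪ {i})`. No agent whose utility is at least `t` loses by the move: the members of
`S` gain by `U S ≤ t`, while `i` and her former partners were below `t`. Meanwhile `i` rises
from below `t` to `t`. So for every level `s ≥ t` the number of agents with utility at least `s`
does not decrease, and at `s = t` it strictly increases; for non-increasingly sorted sequences
this forces a lexicographic increase.
-/

namespace List

variable {β : Type*} [LinearOrder β]

theorem countP_le_eq_zero_of_head_lt {y s : β} {l : List β} (hl : (y :: l).Pairwise (· ≥ ·))
    (hy : y < s) : (y :: l).countP (s ≤ ·) = 0 := by
  rw [countP_eq_zero]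
  intro z hz
  rw [decide_eq_true_eq, not_le]
  rcases mem_cons.1 hz with rfl | hz
  · exact hy
  · exact (rel_of_pairwise_cons hl hz).trans_lt hy

theorem lex_lt_of_countP_le_s2 (t : β) : ∀ {a b : List β}, a.Pairwise (· ≥ ·) →
    b.Pairwise (· ≥ ·) → (∀ s, t ≤ s → a.countP (s ≤ ·) ≤ b.countP (s ≤ ·)) →
    a.countP (t ≤ ·) < b.countP (t ≤ ·) → Lex (· < ·) a b
  | [], [], _, _, _, hlt => by simp at hlt
  | [], _ :: _, _, _, _, _ => Lex.nil
  | _ :: _, [], _, _, _, hlt => by simp at hlt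
  | x :: a, y :: b, ha, hb, hle, hlt => by
    rcases lt_trichotomy x y with hxy | rfl | hyx
    · exact Lex.rel hxy
    · refine Lex.cons (lex_lt_of_countP_le_s2 t ha.of_cons hb.of_cons (fun s hs => ?_) ?_)
      · have := hle s hs
        simp only [countP_cons] at this
        omega
      · simp only [countP_cons] at hlt
        omega
    · exfalso
      by_cases htx : t ≤ x
      · have hx := hle x htx
        rw [countP_le_eq_zero_of_head_lt hb hyx] at hx
        exact (countP_pos_iff.2 ⟨x, mem_cons_self, by simp⟩).ne' (Nat.le_zero.1 hx)
      · have hxt := lt_of_not_ge htx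
        rw [countP_le_eq_zero_of_head_lt ha hxt,
          countP_le_eq_zero_of_head_lt hb (hyx.trans hxt)] at hlt
        exact lt_irrefl 0 hlt

end List

namespace Multiset

variable {ι β : Type*}

theorem lex_sort_ge_of_countP_le [LinearOrder β] {m m' : Multiset β} (t : β)
    (hle : ∀ s, t ≤ s → m.countP (s ≤ ·) ≤ m'.countP (s ≤ ·))
    (hlt : m.countP (t ≤ ·) < m'.countP (t ≤ ·)) :
    List.Lex (· < ·) (m.sort (· ≥ ·)) (m'.sort (· ≥ ·)) := by
  refine List.lex_lt_of_countP_le_s2 t (pairwise_sort _ _) (pairwise_sort _ _) (fun s hs => ?_) ?_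
  · simpa only [← coe_countP, sort_eq] using hle s hs
  · simpa only [← coe_countP, sort_eq] using hlt

theorem countP_map_le_countP_map {s : Multiset ι} {f g : ι → β} {p : β → Prop} [DecidablePred p]
    (h : ∀ j ∈ s, p (f j) → p (g j)) : (s.map f).countP p ≤ (s.map g).countP p := by
  induction s using Quotient.inductionOn with
  | h l =>
    simp only [quot_mk_to_coe, map_coe, coe_countP, List.countP_map]
    exact List.countP_mono_left fun j hj => by simpa using h j hj

theorem lex_sort_ge_map_of_le_of_lt [LinearOrder β] {s : Multiset ι} {f g : ι → β} (t : β)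
    (hle : ∀ j ∈ s, t ≤ f j → f j ≤ g j) {i : ι} (hi : i ∈ s) (hfi : f i < t) (hgi : t ≤ g i) :
    List.Lex (· < ·) ((s.map f).sort (· ≥ ·)) ((s.map g).sort (· ≥ ·)) := by
  have hmono : ∀ u, t ≤ u → ∀ j ∈ s, u ≤ f j → u ≤ g j := fun u hu j hj hfj =>
    hfj.trans (hle j hj (hu.trans hfj))
  classical
  refine lex_sort_ge_of_countP_le t (fun u hu => countP_map_le_countP_map (hmono u hu)) ?_
  rw [← cons_erase hi, map_cons, map_cons, countP_cons_of_neg _ (not_le.2 hfi),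
    countP_cons_of_pos _ hgi]
  exact Nat.lt_succ_of_le
    (countP_map_le_countP_map fun j hj => hmono t le_rfl j (mem_of_mem_erase hj))

end Multiset

def moveInto {α : Type*} [DecidableEq α] (C : α → Finset α) (i : α) (S : Finset α) :
    α → Finset α :=
  fun j => if j ∈ insert i S then insert i S else C j \ {i}

theorem le_utility_moveInto {α β : Type*} [DecidableEq α] [Preorder β] {U : Finset α → β}
    {C : α → Finset α} (hC : IsPartitionFn C) {S : Finset α} {j₀ : α} (hS : C j₀ = S) {i : α}
    (h1 : U (C i) < U (insert i S)) (h2 : U S ≤ U (insert i S)) (j : α)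
    (hj : U (insert i S) ≤ U (C j)) : U (C j) ≤ U (moveInto C i S j) := by
  unfold moveInto
  split_ifs with hjS
  · rcases Finset.mem_insert.1 hjS with rfl | hjS
    · exact absurd (h1.trans_le hj) (lt_irrefl _)
    · have hCj : C j = S := hS ▸ hC.2 j j₀ (hS ▸ hjS)
      rwa [hCj]
  · by_cases hij : i ∈ C j
    · rw [hC.2 i j hij] at h1
      exact absurd (h1.trans_le hj) (lt_irrefl _)
    · rw [Finset.sdiff_singleton_eq_erase, Finset.erase_eq_of_notMem hij]

theorem stmt2_general {α : Type*} [Fintype α] [DecidableEq α]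
    (U : Finset α → ℝ)
    (C : α → Finset α) (hC : IsPartitionFn C)
    (S : Finset α) (j₀ : α) (hS : C j₀ = S)
    (i : α)
    (h1 : U (C i) < U (insert i S)) (h2 : U S ≤ U (insert i S)) :
    List.Lex (· < ·) (psi U C)
      (psi U (fun j => if j ∈ insert i S then insert i S else C j \ {i})) :=
  Multiset.lex_sort_ge_map_of_le_of_lt (U (insert i S))
    (fun j _ => le_utility_moveInto hC hS h1 h2 j) (Finset.mem_univ_val i) h1
    (by simp)

/-- If `S` is a coalition of partition `C`, `i ∉ S`, `U (S ∪ {i}) > U (π(i))` and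
`U (S ∪ {i}) ≥ U S`, then moving `i` into `S` lexicographically increases the sorted
utility sequence. -/
theorem stmt2 {α : Type*} [Fintype α] [DecidableEq α]
    (U : Finset α → ℝ) (hU : ∀ T : Finset α, 0 ≤ U T)
    (C : α → Finset α) (hC : IsPartitionFn C)
    (S : Finset α) (j₀ : α) (hS : C j₀ = S)
    (i : α) (hi : i ∉ S)
    (h1 : U (C i) < U (insert i S)) (h2 : U S ≤ U (insert i S)) :
    List.Lex (· < ·) (psi U C)
      (psi U (fun j => if j ∈ insert i S then insert i S else C j \ {i})) :=
  stmt2_general U C hC S j₀ hS i h1 h2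
end

section
/- Every HGCRP instance has a partition of the agents that is simultaneously Pareto optimal, core stable, and individually stable. -/
/-!
Rank every real number `x` by the number `rank V x` of coalition values `V = U '' 2^N` that are
at most `x`, and give a partition the potential `∑ j, (n + 1) ^ rank V (u_j)`, where `u_j` is
agent `j`'s utility. Since there are only `n` agents, one agent reaching rank `r` outweighs all
agents of rank below `r` together, so the potential strictly increases under any change of
partition that lifts some agent to a value `v ∈ V` without hurting any agent already at `v` or
above. A Pareto improvement, a blocking coalition `S` and an individually stable deviation to
`T` each yield such a change (with `v` the improved utility, `U S`, resp. `U (T ∪ {i})`), so a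
partition of maximal potential has all three properties.
-/

open Finset

section Potential

variable {ι β : Type*} [Fintype ι] [LinearOrder β]

def rank (V : Finset β) (x : β) : ℕ := #(V.filter (· ≤ x))

def potential (V : Finset β) (f : ι → β) : ℕ := ∑ j, (Fintype.card ι + 1) ^ rank V (f j)

theorem rank_mono (V : Finset β) : Monotone (rank V) :=
  fun _ _ hxy => card_le_card (monotone_filter_right V (fun _ _ h => h.trans hxy))

theorem rank_lt_rank_of_lt {V : Finset β} {x v : β} (hv : v ∈ V) (hxv : x < v) :
    rank V x < rank V v := by
  refine card_lt_card ⟨monotone_filter_right V (fun _ _ h => h.trans hxv.le), fun hsub => ?_⟩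
  have hv' := hsub (mem_filter.mpr ⟨hv, le_rfl⟩)
  exact (mem_filter.mp hv').2.not_gt hxv

theorem potential_lt_potential {V : Finset β} {f g : ι → β} {v : β} (hv : v ∈ V)
    (hkeep : ∀ j, v ≤ f j → f j ≤ g j) {j₀ : ι} (hfj₀ : f j₀ < v) (hgj₀ : v ≤ g j₀) :
    potential V f < potential V g := by
  set N := Fintype.card ι + 1
  have hN : 1 ≤ N := Nat.le_add_left 1 _
  set k := rank V v
  have hk : 1 ≤ k := card_pos.mpr ⟨v, mem_filter.mpr ⟨hv, le_rfl⟩⟩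
  set A := univ.filter fun j => v ≤ f j
  set B := univ.filter fun j => ¬ v ≤ f j
  have hsplit (h : ι → β) :
      potential V h = ∑ j ∈ A, N ^ rank V (h j) + ∑ j ∈ B, N ^ rank V (h j) :=
    (sum_filter_add_sum_filter_not univ _ _).symm
  have hA : ∑ j ∈ A, N ^ rank V (f j) ≤ ∑ j ∈ A, N ^ rank V (g j) :=
    sum_le_sum fun j hj => Nat.pow_le_pow_right hN (rank_mono V (hkeep j (mem_filter.mp hj).2))
  -- every agent of `B` sits strictly below rank `k`, and there are fewer than `N` of them
  have hB : ∑ j ∈ B, N ^ rank V (f j) < ∑ j ∈ B, N ^ rank V (g j) :=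
    calc ∑ j ∈ B, N ^ rank V (f j)
        ≤ ∑ _j ∈ B, N ^ (k - 1) := sum_le_sum fun j hj => Nat.pow_le_pow_right hN
          (Nat.le_sub_one_of_lt (rank_lt_rank_of_lt hv (not_le.mp (mem_filter.mp hj).2)))
      _ = #B * N ^ (k - 1) := by rw [sum_const, smul_eq_mul]
      _ < N * N ^ (k - 1) := Nat.mul_lt_mul_of_pos_right
          (Nat.lt_succ_of_le (card_le_univ B)) (Nat.pow_pos hN)
      _ = N ^ k := by rw [← pow_succ', Nat.sub_add_cancel hk]
      _ ≤ N ^ rank V (g j₀) := Nat.pow_le_pow_right hN (rank_mono V hgj₀)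
      _ ≤ ∑ j ∈ B, N ^ rank V (g j) :=
          single_le_sum (f := fun j => N ^ rank V (g j)) (fun _ _ => Nat.zero_le _)
            (mem_filter.mpr ⟨mem_univ _, not_le.mpr hfj₀⟩)
  rw [hsplit f, hsplit g]
  exact Nat.add_lt_add_of_le_of_lt hA hB

end Potential

section CarveOut

variable {α : Type*} [DecidableEq α]

def carveOut (C : α → Finset α) (S : Finset α) (j : α) : Finset α :=
  if j ∈ S then S else C j \ S

theorem carveOut_of_mem {C : α → Finset α} {S : Finset α} {j : α} (hj : j ∈ S) :
    carveOut C S j = S :=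
  if_pos hj

theorem carveOut_of_notMem {C : α → Finset α} {S : Finset α} {j : α} (hj : j ∉ S) :
    carveOut C S j = C j \ S :=
  if_neg hj

theorem carveOut_of_disjoint {C : α → Finset α} {S : Finset α} {j : α} (hj : j ∉ S)
    (hdisj : Disjoint (C j) S) : carveOut C S j = C j := by
  rw [carveOut_of_notMem hj, sdiff_eq_self_of_disjoint hdisj]

theorem IsPartitionFn.carveOut {C : α → Finset α} (hC : IsPartitionFn C) (S : Finset α) :
    IsPartitionFn (carveOut C S) := by
  constructor
  · intro j
    by_cases hj : j ∈ S
    · rwa [carveOut_of_mem hj]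
    · rw [carveOut_of_notMem hj]
      exact mem_sdiff.mpr ⟨hC.1 j, hj⟩
  · intro i j hi
    by_cases hj : j ∈ S
    · rw [carveOut_of_mem hj] at hi
      rw [carveOut_of_mem hi, carveOut_of_mem hj]
    · rw [carveOut_of_notMem hj, mem_sdiff] at hi
      rw [carveOut_of_notMem hi.2, carveOut_of_notMem hj, hC.2 i j hi.1]

end CarveOut

section MaxPotential

variable {α : Type*} [Fintype α] [DecidableEq α] {U : Finset α → ℝ} {C : α → Finset α}

variable (U) in
def IsMaxPotential (C : α → Finset α) : Prop :=
  IsPartitionFn C ∧ ∀ C', IsPartitionFn C' →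
    potential (univ.image U) (U ∘ C') ≤ potential (univ.image U) (U ∘ C)

variable (U) in
theorem exists_isMaxPotential : ∃ C, IsMaxPotential U C := by
  classical
  obtain ⟨C, hC, hmax⟩ := exists_max_image {C : α → Finset α | IsPartitionFn C}
    (fun C => potential (univ.image U) (U ∘ C))
    ⟨fun _ => univ, mem_filter.mpr ⟨mem_univ _, fun i => mem_univ i, fun _ _ _ => rfl⟩⟩
  exact ⟨C, (mem_filter.mp hC).2, fun C' hC' => hmax C' (mem_filter.mpr ⟨mem_univ _, hC'⟩)⟩

theorem IsMaxPotential.false_of_lift (hC : IsMaxPotential U C) {C' : α → Finset α}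
    (hC' : IsPartitionFn C') (S : Finset α)
    (hkeep : ∀ j, U S ≤ U (C j) → U (C j) ≤ U (C' j))
    {j₀ : α} (hCj₀ : U (C j₀) < U S) (hC'j₀ : U S ≤ U (C' j₀)) : False :=
  (hC.2 C' hC').not_gt
    (potential_lt_potential (mem_image_of_mem U (mem_univ S)) hkeep hCj₀ hC'j₀)

theorem IsMaxPotential.false_of_carveOut (hC : IsMaxPotential U C) {S : Finset α}
    (hin : ∀ j ∈ S, U S ≤ U (C j) → U (C j) ≤ U S)
    (hout : ∀ j ∉ S, U S ≤ U (C j) → Disjoint (C j) S)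
    {i : α} (hi : i ∈ S) (hCi : U (C i) < U S) : False := by
  refine hC.false_of_lift (hC.1.carveOut S) S (fun j hj => ?_) hCi
    (congrArg U (carveOut_of_mem hi)).ge
  by_cases hjS : j ∈ S
  · rw [carveOut_of_mem hjS]
    exact hin j hjS hj
  · rw [carveOut_of_disjoint hjS (hout j hjS hj)]

theorem IsMaxPotential.paretoOptimal (hC : IsMaxPotential U C) : ParetoOptimal U C := by
  rintro ⟨C', hC', hle, j₀, hlt⟩
  exact hC.false_of_lift hC' (C' j₀) (fun j _ => hle j) hlt le_rfl

theorem IsMaxPotential.coreStable (hC : IsMaxPotential U C) : CoreStable U C := by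
  rintro ⟨S, ⟨i, hi⟩, hblock⟩
  refine hC.false_of_carveOut (fun j hj hle => absurd (hblock j hj) hle.not_gt)
    (fun j _ hle => disjoint_left.mpr fun x hxC hxS => ?_) hi (hblock i hi)
  rw [← hC.1.2 x j hxC] at hle
  exact hle.not_gt (hblock x hxS)

theorem IsMaxPotential.individuallyStable (hC : IsMaxPotential U C) : IndividuallyStable U C := by
  rintro ⟨i, T, -, hT, hlt⟩
  have hCi : ∀ j, i ∈ C j → U (C j) < U (insert i T) := fun j hij => hC.1.2 i j hij ▸ hlt
  have hTcoal : ∀ j x, x ∈ T → x ∈ C j → C j = T ∧ U T ≤ U (insert i T) := by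
    intro j x hxT hxC
    rcases hT with rfl | ⟨⟨k, rfl⟩, hUT⟩
    · exact absurd hxT (notMem_empty x)
    · exact ⟨(hC.1.2 x j hxC).symm.trans (hC.1.2 x k hxT), hUT⟩
  refine hC.false_of_carveOut (fun j hj hle => ?_) (fun j hj hle => ?_)
    (mem_insert_self i T) hlt
  · rcases mem_insert.mp hj with rfl | hjT
    · exact absurd hlt hle.not_gt
    · obtain ⟨hCj, hUT⟩ := hTcoal j j hjT (hC.1.1 j)
      rwa [hCj]
  · refine disjoint_left.mpr fun x hxC hxS => ?_
    rcases mem_insert.mp hxS with rfl | hxT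
    · exact hle.not_gt (hCi j hxC)
    · exact hj (mem_insert_of_mem ((hTcoal j x hxT hxC).1 ▸ hC.1.1 j))

end MaxPotential

theorem stmt3_general {α : Type*} [Fintype α] [DecidableEq α]
    (U : Finset α → ℝ) :
    ∃ C : α → Finset α, IsPartitionFn C ∧
      ParetoOptimal U C ∧ CoreStable U C ∧ IndividuallyStable U C := by
  obtain ⟨C, hC⟩ := exists_isMaxPotential U
  exact ⟨C, hC.1, hC.paretoOptimal, hC.coreStable, hC.individuallyStable⟩

/-- Every HGCRP instance has a partition that is simultaneously Pareto optimal,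
core stable and individually stable. -/
theorem stmt3 {α : Type*} [Fintype α] [DecidableEq α] [Nonempty α]
    (U : Finset α → ℝ) (hU : ∀ S : Finset α, 0 ≤ U S) :
    ∃ C : α → Finset α, IsPartitionFn C ∧
      ParetoOptimal U C ∧ CoreStable U C ∧ IndividuallyStable U C :=
  stmt3_general U
end

section
/- For any HGCRP instance with n agents, any core stable partition π, and any partition π* maximizing social welfare, the social welfare satisfies W(π*) ≤ n · W(π). -/
/-- For any HGCRP instance with `n` agents, any core stable partition `C` and any
welfare-maximizing partition `Cstar`, we have `W(Cstar) ≤ n * W(C)`. -/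
theorem stmt5 {α : Type*} [Fintype α] [DecidableEq α] [Nonempty α]
    (U : Finset α → ℝ) (hU : ∀ S : Finset α, 0 ≤ U S)
    (C : α → Finset α) (hC : IsPartitionFn C) (hstable : CoreStable U C)
    (Cstar : α → Finset α) (hCstar : IsPartitionFn Cstar)
    (hopt : ∀ C' : α → Finset α, IsPartitionFn C' → welfare U C' ≤ welfare U Cstar) :
    welfare U Cstar ≤ (Fintype.card α : ℝ) * welfare U C := by
  unfold CoreStable at hstable
  push_neg at hstable
  have key : ∀ j, U (Cstar j) ≤ welfare U C := by
    intro j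
    obtain ⟨i, hi, hle⟩ := hstable (Cstar j) ⟨j, hCstar.1 j⟩
    calc U (Cstar j) ≤ U (C i) := hle
      _ ≤ welfare U C := by
        exact Finset.single_le_sum (f := fun k => U (C k)) (fun k _ => hU _)
          (Finset.mem_univ i)
  calc welfare U Cstar = ∑ j, U (Cstar j) := rfl
    _ ≤ ∑ _j : α, welfare U C := Finset.sum_le_sum fun j _ => key j
    _ = (Fintype.card α : ℝ) * welfare U C := by
        simp [Finset.sum_const, nsmul_eq_mul]
end

section
/- The greedy construction—repeatedly forming a coalition of maximum joint utility (ties broken by maximum cardinality) among the remaining agents and removing its members—produces a partition that is both core stable and individually stable for any HGCRP instance. -/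
/-- `GreedyChoice U R Cc`: among the nonempty subsets of the remaining agents `R`,
`Cc` maximizes the joint utility, with ties broken in favor of larger cardinality. -/
def GreedyChoice {α : Type*} [DecidableEq α] (U : Finset α → ℝ) (R Cc : Finset α) : Prop :=
  Cc.Nonempty ∧ Cc ⊆ R ∧ (∀ S ⊆ R, S.Nonempty → U S ≤ U Cc) ∧
    (∀ S ⊆ R, S.Nonempty → U S = U Cc → S.card ≤ Cc.card)

/-- `GreedyRun U R L`: the list of coalitions `L` is a possible run of the greedy procedure
on the set `R` of remaining agents: repeatedly form a greedy-choice coalition and remove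
its members, until no agent remains. -/
inductive GreedyRun {α : Type*} [DecidableEq α] (U : Finset α → ℝ) :
    Finset α → List (Finset α) → Prop
  | nil : GreedyRun U ∅ []
  | cons {R Cc : Finset α} {L : List (Finset α)} :
      GreedyChoice U R Cc → GreedyRun U (R \ Cc) L → GreedyRun U R (Cc :: L)

/-!
The first greedy coalition `B` that meets a nonempty coalition `S` was chosen while all of `S`
was still available, so `U S ≤ U B`, and `|S| ≤ |B|` in case of a tie. Hence some member of `S`
already has utility at least `U S`, so `S` does not block. For individual stability apply this
to `S = insert i T`: if that member is `i`, the move does not help `i`; otherwise `B = T`, and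
`U T ≤ U S ≤ U T` is a tie that the strictly larger `S` would have won.
-/

namespace GreedyRun

variable {α : Type*} [DecidableEq α] {U : Finset α → ℝ} {R : Finset α} {L : List (Finset α)}

theorem subset_of_mem (h : GreedyRun U R L) {B : Finset α} (hB : B ∈ L) : B ⊆ R := by
  induction h with
  | nil => simp at hB
  | cons hc _ ih =>
    rcases List.mem_cons.mp hB with rfl | hB
    · exact hc.2.1
    · exact (ih hB).trans Finset.sdiff_subset

theorem eq_of_mem_of_mem (h : GreedyRun U R L) {B B' : Finset α} (hB : B ∈ L) (hB' : B' ∈ L)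
    {i : α} (hiB : i ∈ B) (hiB' : i ∈ B') : B = B' := by
  induction h with
  | nil => simp at hB
  | @cons R Cc L _ hr ih =>
    have not_mem_tail : ∀ {D}, D ∈ L → i ∈ D → i ∉ Cc := fun hD hiD =>
      (Finset.mem_sdiff.mp (hr.subset_of_mem hD hiD)).2
    rcases List.mem_cons.mp hB with rfl | hBL <;> rcases List.mem_cons.mp hB' with rfl | hBL'
    · rfl
    · exact absurd hiB (not_mem_tail hBL' hiB')
    · exact absurd hiB' (not_mem_tail hBL hiB)
    · exact ih hBL hBL'

theorem exists_mem_inter_nonempty (h : GreedyRun U R L) {S : Finset α} (hSR : S ⊆ R)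
    (hS : S.Nonempty) :
    ∃ B ∈ L, (S ∩ B).Nonempty ∧ U S ≤ U B ∧ (U S = U B → S.card ≤ B.card) := by
  induction h with
  | nil => simp [Finset.subset_empty.mp hSR] at hS
  | @cons R Cc L hc _ ih =>
    by_cases hdisj : Disjoint S Cc
    · obtain ⟨B, hB, hrest⟩ := ih (Finset.subset_sdiff.mpr ⟨hSR, hdisj⟩)
      exact ⟨B, List.mem_cons_of_mem _ hB, hrest⟩
    · exact ⟨Cc, List.mem_cons_self, Finset.not_disjoint_iff_nonempty_inter.mp hdisj,
        hc.2.2.1 S hSR hS, hc.2.2.2 S hSR hS⟩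

theorem exists_mem_le_coalition [Fintype α] (h : GreedyRun U Finset.univ L) {C : α → Finset α}
    (hself : ∀ i, i ∈ C i) (hparts : ∀ i, C i ∈ L) {S : Finset α} (hS : S.Nonempty) :
    ∃ i ∈ S, U S ≤ U (C i) ∧ (U S = U (C i) → S.card ≤ (C i).card) := by
  obtain ⟨B, hB, ⟨i, hi⟩, hrest⟩ := h.exists_mem_inter_nonempty (Finset.subset_univ S) hS
  rw [Finset.mem_inter] at hi
  rw [h.eq_of_mem_of_mem hB (hparts i) hi.2 (hself i)] at hrest
  exact ⟨i, hi.1, hrest⟩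

theorem coreStable [Fintype α] (h : GreedyRun U Finset.univ L) {C : α → Finset α}
    (hself : ∀ i, i ∈ C i) (hparts : ∀ i, C i ∈ L) : CoreStable U C := by
  rintro ⟨S, hS, hblock⟩
  obtain ⟨i, hiS, hle, -⟩ := h.exists_mem_le_coalition hself hparts hS
  exact (hle.trans_lt (hblock i hiS)).false

theorem individuallyStable [Fintype α] (h : GreedyRun U Finset.univ L) {C : α → Finset α}
    (hC : IsPartitionFn C) (hparts : ∀ i, C i ∈ L) : IndividuallyStable U C := by
  rintro ⟨i, T, hiT, hT, hgain⟩
  obtain ⟨x, hx, hle, htie⟩ :=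
    h.exists_mem_le_coalition hC.1 hparts (Finset.insert_nonempty i T)
  rcases Finset.mem_insert.mp hx with rfl | hxT
  · exact (hle.trans_lt hgain).false
  · obtain ⟨⟨j, rfl⟩, hjoin⟩ := hT.resolve_left (Finset.ne_empty_of_mem hxT)
    rw [hC.2 x j hxT] at hle htie
    have hcard := htie (le_antisymm hle hjoin)
    rw [Finset.card_insert_of_notMem hiT] at hcard
    omega

end GreedyRun

theorem stmt8_general {α : Type*} [Fintype α] [DecidableEq α]
    (U : Finset α → ℝ)
    (L : List (Finset α)) (hL : GreedyRun U Finset.univ L)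
    (C : α → Finset α) (hC : IsPartitionFn C) (hparts : ∀ i, C i ∈ L) :
    CoreStable U C ∧ IndividuallyStable U C :=
  ⟨hL.coreStable hC.1 hparts, hL.individuallyStable hC hparts⟩

/-- The greedy construction produces a partition that is both core stable and individually
stable for any HGCRP instance. -/
theorem stmt8 {α : Type*} [Fintype α] [DecidableEq α]
    (U : Finset α → ℝ) (hU : ∀ S : Finset α, 0 ≤ U S)
    (L : List (Finset α)) (hL : GreedyRun U Finset.univ L)
    (C : α → Finset α) (hC : IsPartitionFn C) (hparts : ∀ i, C i ∈ L) :
    CoreStable U C ∧ IndividuallyStable U C :=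
  stmt8_general U L hL C hC hparts
end

section
/- An instance of EXACT-COVER (universe 𝒰, family 𝒮 of subsets of 𝒰) admits an exact cover if and only if the associated HGCRP instance—where each S_j ∈ 𝒮 has joint utility 2, singletons have joint utility 1, and all other coalitions have joint utility 0—admits a perfect partition. -/
/-- A partition is perfect if every agent attains the maximum utility she can attain
in any coalition containing her. -/
def IsPerfect {α : Type*} (U : Finset α → ℝ) (C : α → Finset α) : Prop :=
  ∀ i, ∀ S : Finset α, i ∈ S → U S ≤ U (C i)

/-- An EXACT-COVER instance admits an exact cover iff the associated HGCRP instance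
(where members of `𝒮` have joint utility `2`, singletons joint utility `1` and all other
coalitions joint utility `0`) admits a perfect partition. -/
theorem stmt11 {α : Type*} [Fintype α] [DecidableEq α]
    (𝒮 : Finset (Finset α)) (hcover : ∀ x : α, ∃ S ∈ 𝒮, x ∈ S)
    (U : Finset α → ℝ)
    (hU : ∀ S : Finset α, U S = if S ∈ 𝒮 then 2 else if S.card = 1 then 1 else 0) :
    (∃ 𝒞 ⊆ 𝒮, ∀ x : α, ∃! S, S ∈ 𝒞 ∧ x ∈ S) ↔
      ∃ C : α → Finset α, IsPartitionFn C ∧ IsPerfect U C := by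
  constructor
  · rintro ⟨𝒞, h𝒞, huniq⟩
    choose f hf using fun x => (huniq x).exists
    refine ⟨f, ⟨fun i => (hf i).2, fun i j hij => ?_⟩, fun i S hiS => ?_⟩
    · exact ((huniq i).unique (hf i) ⟨(hf j).1, hij⟩)
    · have h2 : U (f i) = 2 := by rw [hU]; simp [h𝒞 (hf i).1]
      rw [h2, hU]
      split
      · exact le_refl _
      · split <;> norm_num
  · rintro ⟨C, ⟨hmem, hcons⟩, hperf⟩
    have hC𝒮 : ∀ i, C i ∈ 𝒮 := by
      intro i
      obtain ⟨S, hS, hiS⟩ := hcover i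
      have := hperf i S hiS
      rw [hU S, if_pos hS, hU (C i)] at this
      by_contra h
      rw [if_neg h] at this
      split at this <;> norm_num at this
    refine ⟨Finset.univ.image C, ?_, fun x => ⟨C x, ⟨Finset.mem_image_of_mem _ (Finset.mem_univ x), hmem x⟩, ?_⟩⟩
    · intro S hS
      obtain ⟨j, _, rfl⟩ := Finset.mem_image.mp hS
      exact hC𝒮 j
    · rintro S ⟨hS, hxS⟩
      obtain ⟨j, _, rfl⟩ := Finset.mem_image.mp hS
      exact (hcons x j hxS).symm
end

section
/- Let G = (V, E) be a graph and (N, U) the HGCRP instance with agents N = E, where for each vertex v with nonempty incident edge set C_v, U(C_v) = 1/|C_v|, U({e}) = ε for singletons not of the form C_v (with 0 < ε ≤ 1/|E|²), and U(S) = 0 otherwise. Then for any partition π of N containing no coalition of joint utility 0, the set I of coalitions of π of the form C_v corresponds to an independent set of G, and W(π) = |I| + ε·|J| where J is the set of remaining (singleton) coalitions of π. -/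
open scoped Classical in
/-- In the HGCRP instance constructed from a graph `G` (agents are the edges, each vertex
`v` with nonempty incident edge set `Cv v` gives a coalition of joint utility `1/|Cv v|`,
other singletons have joint utility `ε`, and everything else `0`), any partition with no
zero-utility coalition has its `Cv`-coalitions corresponding to an independent set of `G`,
and social welfare `|I| + ε * |J|` where `J` is the set of remaining (singleton) coalitions. -/
theorem stmt12 {V : Type*} [Fintype V] [DecidableEq V]
    (G : SimpleGraph V) [DecidableRel G.Adj]
    (ε : ℝ) (hε0 : 0 < ε) (hε1 : ε ≤ 1 / (Fintype.card G.edgeSet : ℝ) ^ 2)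
    (Cv : V → Finset G.edgeSet)
    (hCv : ∀ v : V, Cv v = Finset.univ.filter (fun e : G.edgeSet => v ∈ (e : Sym2 V)))
    (U : Finset G.edgeSet → ℝ)
    (hU1 : ∀ v : V, (Cv v).Nonempty → U (Cv v) = 1 / ((Cv v).card : ℝ))
    (hU2 : ∀ e : G.edgeSet, (¬ ∃ v, ({e} : Finset G.edgeSet) = Cv v) → U {e} = ε)
    (hU3 : ∀ S : Finset G.edgeSet, (¬ ∃ v, (Cv v).Nonempty ∧ S = Cv v) → S.card ≠ 1 → U S = 0)
    (C : G.edgeSet → Finset G.edgeSet) (hC : IsPartitionFn C)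
    (hnz : ∀ e : G.edgeSet, U (C e) ≠ 0)
    (I J : Finset (Finset G.edgeSet))
    (hI : I = (Finset.univ.image C).filter (fun P => ∃ v, P = Cv v))
    (hJ : J = (Finset.univ.image C).filter (fun P => ¬ ∃ v, P = Cv v)) :
    (∃ s : Finset V, I = s.image Cv ∧ s.card = I.card ∧
      ∀ v ∈ s, ∀ w ∈ s, v ≠ w → ¬ G.Adj v w) ∧
    welfare U C = (I.card : ℝ) + ε * (J.card : ℝ) := by

  classical
  obtain ⟨hC1, hC2⟩ := hC
  have hmem : ∀ P ∈ Finset.univ.image C, ∀ e : G.edgeSet, e ∈ P ↔ C e = P := by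
    intro P hP e
    obtain ⟨e', -, rfl⟩ := Finset.mem_image.mp hP
    exact ⟨fun h => hC2 e e' h, fun h => h ▸ hC1 e⟩
  have hIsub : I ⊆ Finset.univ.image C := by rw [hI]; exact Finset.filter_subset _ _
  have hspec : ∀ P ∈ I, ∃ v, P = Cv v := by
    rw [hI]; intro P hP; exact (Finset.mem_filter.mp hP).2
  set f : {x // x ∈ I} → V := fun x => (hspec x.1 x.2).choose with hf
  have hfspec : ∀ x : {x // x ∈ I}, (x : Finset G.edgeSet) = Cv (f x) :=
    fun x => (hspec x.1 x.2).choose_spec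
  set s : Finset V := I.attach.image f with hs
  constructor
  · refine ⟨s, ?_, ?_, ?_⟩
    · rw [hs, Finset.image_image]
      have h1 : (Cv ∘ f) = fun x : {x // x ∈ I} => (x : Finset G.edgeSet) := by
        funext x; exact (hfspec x).symm
      rw [h1, Finset.attach_image_val]
    · have hinj : Function.Injective f := by
        intro x y hxy
        exact Subtype.ext (by rw [hfspec x, hfspec y, hxy])
      rw [hs, Finset.card_image_of_injective _ hinj, Finset.card_attach]
    · intro v hv w hw hvw hadj
      obtain ⟨x, -, rfl⟩ := Finset.mem_image.mp hv
      obtain ⟨y, -, rfl⟩ := Finset.mem_image.mp hw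
      set e : G.edgeSet := ⟨s(f x, f y), G.mem_edgeSet.mpr hadj⟩ with he
      have hex : e ∈ Cv (f x) := by
        rw [hCv]; simp [he]
      have hey : e ∈ Cv (f y) := by
        rw [hCv]; simp [he]
      have h1 : C e = (x : Finset G.edgeSet) := by
        rw [(hmem x.1 (hIsub x.2) e).symm, hfspec x]; exact hex
      have h2 : C e = (y : Finset G.edgeSet) := by
        rw [(hmem y.1 (hIsub y.2) e).symm, hfspec y]; exact hey
      exact hvw (congrArg f (Subtype.ext (h1 ▸ h2)))
  · have key : ∀ P ∈ Finset.univ.image C,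
        ∑ e ∈ Finset.univ.filter (fun e => C e = P), U (C e) = (P.card : ℝ) * U P := by
      intro P hP
      have hfib : Finset.univ.filter (fun e => C e = P) = P := by
        ext e; simp [hmem P hP e]
      rw [Finset.sum_congr hfib (fun e he => by rw [(hmem P hP e).mp he])]
      rw [Finset.sum_const, nsmul_eq_mul]
    have hw : welfare U C = ∑ P ∈ Finset.univ.image C, (P.card : ℝ) * U P := by
      rw [welfare,
        ← Finset.sum_fiberwise_of_maps_to (fun e _ => Finset.mem_image_of_mem C (Finset.mem_univ e))]
      exact Finset.sum_congr rfl key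
    have hsplit : Finset.univ.image C = I ∪ J := by
      rw [hI, hJ, Finset.filter_union_filter_not_eq]
    have hdisj : Disjoint I J := by
      rw [hI, hJ]; exact Finset.disjoint_filter_filter_not _ _ _
    have hIsum : ∀ P ∈ I, (P.card : ℝ) * U P = 1 := by
      intro P hP
      obtain ⟨e0, -, hPe⟩ := Finset.mem_image.mp (hIsub hP)
      obtain ⟨v, rfl⟩ := hspec P hP
      have hne : (Cv v).Nonempty := ⟨e0, hPe ▸ hC1 e0⟩
      have hcard : ((Cv v).card : ℝ) ≠ 0 := by
        exact_mod_cast Finset.card_ne_zero_of_mem hne.choose_spec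
      rw [hU1 v hne]
      field_simp
    have hJsum : ∀ P ∈ J, (P.card : ℝ) * U P = ε := by
      intro P hP
      have hP' := hP
      rw [hJ, Finset.mem_filter] at hP'
      obtain ⟨hPim, hPn⟩ := hP'
      obtain ⟨e0, -, hPe⟩ := Finset.mem_image.mp hPim
      have hne : U P ≠ 0 := hPe ▸ hnz e0
      have hc1 : P.card = 1 := by
        by_contra h
        exact hne (hU3 P (fun ⟨v, _, hv⟩ => hPn ⟨v, hv⟩) h)
      obtain ⟨e, rfl⟩ := Finset.card_eq_one.mp hc1
      rw [hU2 e (fun ⟨v, hv⟩ => hPn ⟨v, hv⟩)]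
      simp
    rw [hw, hsplit, Finset.sum_union hdisj,
      Finset.sum_congr rfl hIsum, Finset.sum_congr rfl hJsum,
      Finset.sum_const, Finset.sum_const, nsmul_eq_mul, nsmul_eq_mul, mul_one, mul_comm]
end

section
/- In the HGCRP instance constructed from a graph G as in the independent-set reduction, the coalitions of the form C_v in any socially optimal partition correspond to a maximum independent set of G. -/
/-!
The welfare of a partition is the sum, over its coalitions `P`, of `|P| · U P`. A coalition
`C_v` contributes exactly `1`; any other coalition contributes at most `ε`, and only a singleton
`{e} ≠ C_v` contributes anything, which forces at least two edges. As there are at most `n`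
coalitions and `ε n ≤ 1 / n < 1` for `n ≥ 2`, an optimal partition has welfare `< |I*| + 1`.
Conversely, for an independent set `t` the coalitions `C_v`, `v ∈ t`, are pairwise disjoint;
completed by singletons they form a partition of welfare `≥ |t|`, so `|t| ≤ |I*|`. Finally the
vertices indexing `I*` are independent, since coalitions sharing an edge coincide.
-/

open Finset

section Partition

variable {α : Type*} [DecidableEq α] {C : α → Finset α}

theorem IsPartitionFn.eq_of_not_disjoint (hC : IsPartitionFn C) {i j : α}
    (h : ¬ Disjoint (C i) (C j)) : C i = C j := by
  obtain ⟨k, hki, hkj⟩ := Finset.not_disjoint_iff.mp h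
  exact (hC.2 k i hki).symm.trans (hC.2 k j hkj)

theorem IsPartitionFn.filter_eq [Fintype α] (hC : IsPartitionFn C) (i : α) :
    univ.filter (fun j => C j = C i) = C i := by
  ext j
  simp only [mem_filter, mem_univ, true_and]
  exact ⟨fun h => h ▸ hC.1 j, hC.2 j i⟩

theorem IsPartitionFn.welfare_eq_sum_coalitions [Fintype α] (hC : IsPartitionFn C)
    (U : Finset α → ℝ) : welfare U C = ∑ P ∈ univ.image C, P.card * U P := by
  rw [welfare, sum_comp]
  refine sum_congr rfl fun P hP => ?_
  obtain ⟨i, -, rfl⟩ := mem_image.mp hP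
  rw [hC.filter_eq, nsmul_eq_mul]

variable {ι : Type*}

noncomputable def partitionOfDisjoint (s : Finset ι) (P : ι → Finset α) (i : α) : Finset α :=
  if h : ∃ k ∈ s, i ∈ P k then P h.choose else {i}

variable {s : Finset ι} {P : ι → Finset α}

theorem partitionOfDisjoint_eq (hP : (s : Set ι).PairwiseDisjoint P) {k : ι} {i : α}
    (hk : k ∈ s) (hi : i ∈ P k) : partitionOfDisjoint s P i = P k := by
  have h : ∃ k ∈ s, i ∈ P k := ⟨k, hk, hi⟩
  rw [partitionOfDisjoint, dif_pos h]
  obtain ⟨hks, hik⟩ := h.choose_spec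
  rw [hP.elim hks hk (Finset.not_disjoint_iff.mpr ⟨i, hik, hi⟩)]

theorem isPartitionFn_partitionOfDisjoint (hP : (s : Set ι).PairwiseDisjoint P) :
    IsPartitionFn (partitionOfDisjoint s P) := by
  refine ⟨fun i => ?_, fun i j hij => ?_⟩
  · by_cases h : ∃ k ∈ s, i ∈ P k
    · obtain ⟨k, hk, hi⟩ := h
      rw [partitionOfDisjoint_eq hP hk hi]
      exact hi
    · rw [partitionOfDisjoint, dif_neg h]
      exact mem_singleton_self i
  · by_cases h : ∃ k ∈ s, j ∈ P k
    · obtain ⟨k, hk, hj⟩ := h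
      rw [partitionOfDisjoint_eq hP hk hj] at hij ⊢
      exact partitionOfDisjoint_eq hP hk hij
    · rw [partitionOfDisjoint, dif_neg h, mem_singleton] at hij
      rw [hij]

theorem sum_card_mul_le_welfare_partitionOfDisjoint [Fintype α]
    (hP : (s : Set ι).PairwiseDisjoint P) {U : Finset α → ℝ} (hU : ∀ S, 0 ≤ U S) :
    ∑ k ∈ s, (P k).card * U (P k) ≤ welfare U (partitionOfDisjoint s P) := by
  calc ∑ k ∈ s, (P k).card * U (P k)
      = ∑ k ∈ s, ∑ i ∈ P k, U (partitionOfDisjoint s P i) := by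
        refine sum_congr rfl fun k hk => ?_
        rw [sum_congr rfl fun i hi => by rw [partitionOfDisjoint_eq hP hk hi], sum_const,
          nsmul_eq_mul]
    _ = ∑ i ∈ s.biUnion P, U (partitionOfDisjoint s P i) := (sum_biUnion hP).symm
    _ ≤ welfare U (partitionOfDisjoint s P) :=
        sum_le_sum_of_subset_of_nonneg (subset_univ _) fun _ _ _ => hU _

end Partition

theorem natCast_mul_lt_one_of_le_one_div_sq {n : ℕ} (hn : 1 < n) {ε : ℝ}
    (hε : ε ≤ 1 / (n : ℝ) ^ 2) : n * ε < 1 := by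
  have hn' : (1 : ℝ) < n := by exact_mod_cast hn
  calc n * ε ≤ n * (1 / (n : ℝ) ^ 2) := by gcongr
    _ = 1 / n := by field_simp
    _ < 1 := by rw [div_lt_one (by linarith)]; exact hn'

section Graph

variable {V : Type*} {G : SimpleGraph V} {Cv : V → Finset G.edgeSet}

theorem disjoint_incidence_iff_not_adj (hCv : ∀ v e, e ∈ Cv v ↔ v ∈ (e : Sym2 V)) {v w : V}
    (hvw : v ≠ w) : Disjoint (Cv v) (Cv w) ↔ ¬ G.Adj v w := by
  rw [Finset.disjoint_left]
  refine ⟨fun h hadj => h ((hCv v ⟨s(v, w), hadj⟩).2 (Sym2.mem_mk_left v w))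
    ((hCv w _).2 (Sym2.mem_mk_right v w)), fun hadj e hv hw => ?_⟩
  rw [hCv] at hv hw
  have he : (e : Sym2 V) = s(v, w) := (Sym2.mem_and_mem_iff hvw).mp ⟨hv, hw⟩
  exact hadj (G.mem_edgeSet.mp (he ▸ e.2))

theorem incidence_eq_of_adj [DecidableEq G.edgeSet] (hCv : ∀ v e, e ∈ Cv v ↔ v ∈ (e : Sym2 V))
    {C : G.edgeSet → Finset G.edgeSet} (hC : IsPartitionFn C) {v w : V}
    (hv : ∃ e, C e = Cv v) (hw : ∃ e, C e = Cv w) (hadj : G.Adj v w) : Cv v = Cv w := by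
  obtain ⟨a, ha⟩ := hv
  obtain ⟨b, hb⟩ := hw
  rw [← ha, ← hb]
  refine hC.eq_of_not_disjoint fun h => ?_
  rw [ha, hb, disjoint_incidence_iff_not_adj hCv hadj.ne] at h
  exact h hadj

theorem exists_eq_incidence_of_card_le_one [Fintype G.edgeSet]
    (hCv : ∀ v e, e ∈ Cv v ↔ v ∈ (e : Sym2 V)) (hn : Fintype.card G.edgeSet ≤ 1)
    {S : Finset G.edgeSet} (hS : S.Nonempty) : ∃ v, S = Cv v := by
  have := Fintype.card_le_one_iff_subsingleton.mp hn
  obtain ⟨e, -⟩ := id hS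
  have he : e ∈ Cv (e : Sym2 V).out.1 := (hCv _ _).2 (Sym2.out_fst_mem _)
  exact ⟨_, hS.eq_univ.trans (Nonempty.eq_univ ⟨e, he⟩).symm⟩

end Graph

section Utility

variable {V α : Type*} {Cv : V → Finset α} {U : Finset α → ℝ} {ε : ℝ}

theorem card_mul_utility_incidence
    (hU1 : ∀ v : V, (Cv v).Nonempty → U (Cv v) = 1 / ((Cv v).card : ℝ)) {v : V}
    (hv : (Cv v).Nonempty) : (Cv v).card * U (Cv v) = 1 := by
  rw [hU1 v hv, mul_one_div_cancel (Nat.cast_ne_zero.mpr hv.card_pos.ne')]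

theorem utility_nonneg (hε0 : 0 ≤ ε)
    (hU1 : ∀ v : V, (Cv v).Nonempty → U (Cv v) = 1 / ((Cv v).card : ℝ))
    (hU2 : ∀ e : α, (¬ ∃ v, ({e} : Finset α) = Cv v) → U {e} = ε)
    (hU3 : ∀ S : Finset α, (¬ ∃ v, (Cv v).Nonempty ∧ S = Cv v) → S.card ≠ 1 → U S = 0)
    (S : Finset α) : 0 ≤ U S := by
  by_cases hS : ∃ v, (Cv v).Nonempty ∧ S = Cv v
  · obtain ⟨v, hv, rfl⟩ := hS
    rw [hU1 v hv]
    positivity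
  by_cases hc : S.card = 1
  · obtain ⟨e, rfl⟩ := card_eq_one.mp hc
    rw [hU2 e fun ⟨v, hv⟩ => hS ⟨v, hv ▸ singleton_nonempty e, hv⟩]
    exact hε0
  · rw [hU3 S hS hc]

theorem card_mul_utility_le (hε0 : 0 ≤ ε)
    (hU2 : ∀ e : α, (¬ ∃ v, ({e} : Finset α) = Cv v) → U {e} = ε)
    (hU3 : ∀ S : Finset α, (¬ ∃ v, (Cv v).Nonempty ∧ S = Cv v) → S.card ≠ 1 → U S = 0)
    {S : Finset α} (hS : ¬ ∃ v, S = Cv v) : S.card * U S ≤ ε := by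
  by_cases hc : S.card = 1
  · obtain ⟨e, rfl⟩ := card_eq_one.mp hc
    rw [hU2 e hS, card_singleton, Nat.cast_one, one_mul]
  · rw [hU3 S (fun ⟨v, _, hv⟩ => hS ⟨v, hv⟩) hc, mul_zero]
    exact hε0

end Utility

section Welfare

variable {V : Type*} {G : SimpleGraph V} [Fintype G.edgeSet] {Cv : V → Finset G.edgeSet}
  {U : Finset G.edgeSet → ℝ} {ε : ℝ}

theorem sum_card_mul_utility_lt_one (hCv : ∀ v e, e ∈ Cv v ↔ v ∈ (e : Sym2 V)) (hε0 : 0 ≤ ε)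
    (hε1 : ε ≤ 1 / (Fintype.card G.edgeSet : ℝ) ^ 2)
    (hU2 : ∀ e : G.edgeSet, (¬ ∃ v, ({e} : Finset G.edgeSet) = Cv v) → U {e} = ε)
    (hU3 : ∀ S : Finset G.edgeSet, (¬ ∃ v, (Cv v).Nonempty ∧ S = Cv v) → S.card ≠ 1 → U S = 0)
    {𝒬 : Finset (Finset G.edgeSet)} (hne : ∀ P ∈ 𝒬, P.Nonempty)
    (hQ : ∀ P ∈ 𝒬, ¬ ∃ v, P = Cv v) (hcard : 𝒬.card ≤ Fintype.card G.edgeSet) :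
    ∑ P ∈ 𝒬, P.card * U P < 1 := by
  rcases le_or_gt (Fintype.card G.edgeSet) 1 with hn | hn
  · have h𝒬 : 𝒬 = ∅ := eq_empty_of_forall_notMem fun P hP =>
      hQ P hP (exists_eq_incidence_of_card_le_one hCv hn (hne P hP))
    simp [h𝒬]
  · calc ∑ P ∈ 𝒬, P.card * U P ≤ 𝒬.card • ε :=
          sum_le_card_nsmul _ _ _ fun P hP => card_mul_utility_le hε0 hU2 hU3 (hQ P hP)
      _ ≤ Fintype.card G.edgeSet * ε := by
          rw [nsmul_eq_mul]
          gcongr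
      _ < 1 := natCast_mul_lt_one_of_le_one_div_sq hn hε1

theorem welfare_lt_card_add_one [DecidableEq G.edgeSet]
    (hCv : ∀ v e, e ∈ Cv v ↔ v ∈ (e : Sym2 V)) (hε0 : 0 ≤ ε)
    (hε1 : ε ≤ 1 / (Fintype.card G.edgeSet : ℝ) ^ 2)
    (hU1 : ∀ v : V, (Cv v).Nonempty → U (Cv v) = 1 / ((Cv v).card : ℝ))
    (hU2 : ∀ e : G.edgeSet, (¬ ∃ v, ({e} : Finset G.edgeSet) = Cv v) → U {e} = ε)
    (hU3 : ∀ S : Finset G.edgeSet, (¬ ∃ v, (Cv v).Nonempty ∧ S = Cv v) → S.card ≠ 1 → U S = 0)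
    {C : G.edgeSet → Finset G.edgeSet} (hC : IsPartitionFn C) {I : Finset (Finset G.edgeSet)}
    (hI : ∀ P, P ∈ I ↔ (∃ e, C e = P) ∧ ∃ v, P = Cv v) :
    welfare U C < I.card + 1 := by
  classical
  have hfilter : (univ.image C).filter (fun P => ∃ v, P = Cv v) = I := by
    ext P
    simp [hI]
  have hI1 : ∑ P ∈ I, P.card * U P = I.card := by
    rw [card_eq_sum_ones, Nat.cast_sum, Nat.cast_one]
    refine sum_congr rfl fun P hP => ?_
    obtain ⟨⟨e, rfl⟩, v, hv⟩ := (hI P).1 hP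
    rw [hv]
    exact card_mul_utility_incidence hU1 (hv ▸ ⟨e, hC.1 e⟩)
  have hrest : ∑ P ∈ (univ.image C).filter (fun P => ¬ ∃ v, P = Cv v), P.card * U P < 1 := by
    refine sum_card_mul_utility_lt_one hCv hε0 hε1 hU2 hU3 (fun P hP => ?_)
      (fun P hP => (mem_filter.mp hP).2) ((card_filter_le _ _).trans card_image_le)
    obtain ⟨e, -, rfl⟩ := mem_image.mp (mem_filter.mp hP).1
    exact ⟨e, hC.1 e⟩
  rw [hC.welfare_eq_sum_coalitions, ← sum_filter_add_sum_filter_not _ (fun P => ∃ v, P = Cv v),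
    hfilter, hI1]
  linarith

theorem exists_partition_card_le_welfare [DecidableEq G.edgeSet]
    (hCv : ∀ v e, e ∈ Cv v ↔ v ∈ (e : Sym2 V)) (hiso : ∀ v : V, (Cv v).Nonempty)
    (hU1 : ∀ v : V, (Cv v).Nonempty → U (Cv v) = 1 / ((Cv v).card : ℝ)) (hU : ∀ S, 0 ≤ U S)
    {t : Finset V} (ht : G.IsIndepSet t) :
    ∃ C : G.edgeSet → Finset G.edgeSet, IsPartitionFn C ∧ (t.card : ℝ) ≤ welfare U C := by
  have hdisj : (t : Set V).PairwiseDisjoint Cv := fun v hv w hw hvw =>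
    (disjoint_incidence_iff_not_adj hCv hvw).2 (ht hv hw hvw)
  refine ⟨_, isPartitionFn_partitionOfDisjoint hdisj, ?_⟩
  calc (t.card : ℝ) = ∑ v ∈ t, (Cv v).card * U (Cv v) := by
        simp [card_mul_utility_incidence hU1 (hiso _)]
    _ ≤ _ := sum_card_mul_le_welfare_partitionOfDisjoint hdisj hU

end Welfare

open scoped Classical in
/-- In the HGCRP instance constructed from a graph `G` as in the independent-set reduction,
the `Cv`-coalitions of any socially optimal partition correspond to a maximum independent
set of `G`. -/
theorem stmt13 {V : Type*} [Fintype V] [DecidableEq V]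
    (G : SimpleGraph V) [DecidableRel G.Adj]
    (ε : ℝ) (hε0 : 0 < ε) (hε1 : ε ≤ 1 / (Fintype.card G.edgeSet : ℝ) ^ 2)
    (Cv : V → Finset G.edgeSet)
    (hCv : ∀ v : V, Cv v = Finset.univ.filter (fun e : G.edgeSet => v ∈ (e : Sym2 V)))
    (hiso : ∀ v : V, (Cv v).Nonempty)
    (U : Finset G.edgeSet → ℝ)
    (hU1 : ∀ v : V, (Cv v).Nonempty → U (Cv v) = 1 / ((Cv v).card : ℝ))
    (hU2 : ∀ e : G.edgeSet, (¬ ∃ v, ({e} : Finset G.edgeSet) = Cv v) → U {e} = ε)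
    (hU3 : ∀ S : Finset G.edgeSet, (¬ ∃ v, (Cv v).Nonempty ∧ S = Cv v) → S.card ≠ 1 → U S = 0)
    (Cstar : G.edgeSet → Finset G.edgeSet) (hCstar : IsPartitionFn Cstar)
    (hopt : ∀ C : G.edgeSet → Finset G.edgeSet, IsPartitionFn C →
      welfare U C ≤ welfare U Cstar)
    (Istar : Finset (Finset G.edgeSet))
    (hIstar : Istar = (Finset.univ.image Cstar).filter (fun P => ∃ v, P = Cv v)) :
    ∃ s : Finset V, Istar = s.image Cv ∧ s.card = Istar.card ∧
      (∀ v ∈ s, ∀ w ∈ s, v ≠ w → ¬ G.Adj v w) ∧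
      ∀ t : Finset V, (∀ v ∈ t, ∀ w ∈ t, v ≠ w → ¬ G.Adj v w) → t.card ≤ s.card := by
  have hmem : ∀ v e, e ∈ Cv v ↔ v ∈ (e : Sym2 V) := fun v e => by simp [hCv]
  have hI : ∀ P, P ∈ Istar ↔ (∃ e, Cstar e = P) ∧ ∃ v, P = Cv v := fun P => by
    simp [hIstar, and_comm]
  have hU := utility_nonneg hε0.le hU1 hU2 hU3
  obtain ⟨s, -, hinj, rfl⟩ := exists_subset_injOn_image_eq_of_surjOn Set.univ Istar
    fun P hP => by
      obtain ⟨-, v, rfl⟩ := (hI P).1 hP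
      exact ⟨v, trivial, rfl⟩
  have hcard : s.card = (s.image Cv).card := (card_image_of_injOn hinj).symm
  have hcoal : ∀ v ∈ s, ∃ e, Cstar e = Cv v := fun v hv => ((hI _).1 (mem_image_of_mem Cv hv)).1
  have hmax : G.IsMaximumIndepSet s := by
    refine ⟨fun v hv w hw hvw hadj => hvw (hinj hv hw ?_), fun t ht => ?_⟩
    · exact incidence_eq_of_adj hmem hCstar (hcoal v hv) (hcoal w hw) hadj
    · obtain ⟨C, hC, htC⟩ := exists_partition_card_le_welfare hmem hiso hU1 hU ht
      have hlt := welfare_lt_card_add_one hmem hε0.le hε1 hU1 hU2 hU3 hCstar hI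
      have hlt' : (t.card : ℝ) < s.card + 1 := by
        rw [hcard]
        linarith [hopt C hC]
      exact Nat.lt_succ_iff.mp (by exact_mod_cast hlt')
  exact ⟨s, rfl, hcard, hmax.isIndepSet, hmax.maximum⟩
end
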